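/- arXiv:1112.5066 — 4 statements merged into one kernel-verified Lean document; each statement's English description precedes it below -/
import Mathlib

section
/- Let V be a real vector space, e : V → ℝ a linear functional, X a finite index set, and (A_i)_{i∈X} a family of linear maps V → V satisfying the repeatability condition A_i ∘ A_j = δ_{ij} A_i for all i, j ∈ X. Let ρ ∈ V and suppose e(A_i ρ) ≠ 0 for every i ∈ X. Define the states ρ_i := e(A_i ρ)⁻¹ • (A_i ρ) and the effects a_i := e ∘ A_i. Then a_j(ρ_i) = δ_{ij} for all i, j ∈ X, i.e. the states (ρ_i) are perfectly distinguishable by the observation-test (a_i). -/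
theorem LinearMap.apply_inv_smul_self {K M : Type*} [Field K] [AddCommGroup M] [Module K M]
    (e : M →ₗ[K] K) {v : M} (hv : e v ≠ 0) : e ((e v)⁻¹ • v) = 1 := by
  rw [map_smul, smul_eq_mul, inv_mul_cancel₀ hv]

theorem apply_apply_of_comp_eq_ite {R M X : Type*} [Semiring R] [AddCommMonoid M] [Module R M]
    [DecidableEq X] {A : X → (M →ₗ[R] M)} (hrep : ∀ i j, A i ∘ₗ A j = if i = j then A i else 0)
    (i j : X) (v : M) : A j (A i v) = if i = j then A i v else 0 := by
  rw [← LinearMap.comp_apply, hrep j i]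
  rcases eq_or_ne i j with rfl | hij
  · simp
  · simp [hij, hij.symm]

theorem objective_info_gives_distinguishable_states_general
    {V : Type*} [AddCommGroup V] [Module ℝ V]
    (e : V →ₗ[ℝ] ℝ)
    {X : Type*} [DecidableEq X]
    (A : X → (V →ₗ[ℝ] V))
    (hrep : ∀ i j, (A i) ∘ₗ (A j) = if i = j then A i else 0)
    (ρ : V) (hne : ∀ i, e (A i ρ) ≠ 0) :
    ∀ i j, (e ∘ₗ A j) ((e (A i ρ))⁻¹ • (A i ρ)) = if i = j then 1 else 0 := by
  intro i j
  rw [LinearMap.comp_apply, map_smul, apply_apply_of_comp_eq_ite hrep]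
  split_ifs
  · exact e.apply_inv_smul_self (hne i)
  · simp

/-- Lemma 2 of the paper. In a causal probabilistic theory, if a
repeatable test `(A i)` (i.e. `A i ∘ A j = δ_{ij} A i`) is applied to a state `ρ` with
`e (A i ρ) ≠ 0` for all `i`, then the conditional states `ρ_i := e (A i ρ)⁻¹ • A i ρ`
are perfectly distinguishable by the effects `a_i := e ∘ A i`. -/
theorem objective_info_gives_distinguishable_states
    {V : Type*} [AddCommGroup V] [Module ℝ V]
    (e : V →ₗ[ℝ] ℝ)
    {X : Type*} [Fintype X] [DecidableEq X]
    (A : X → (V →ₗ[ℝ] V))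
    (hrep : ∀ i j, (A i) ∘ₗ (A j) = if i = j then A i else 0)
    (ρ : V) (hne : ∀ i, e (A i ρ) ≠ 0) :
    ∀ i j, (e ∘ₗ A j) ((e (A i ρ))⁻¹ • (A i ρ)) = if i = j then 1 else 0 :=
  objective_info_gives_distinguishable_states_general e A hrep ρ hne
end

section
/- Let V_A and V_B be finite-dimensional real vector spaces, S_A ⊆ V_A and S_B ⊆ V_B convex sets, and e_A : V_A → ℝ, e_B : V_B → ℝ linear functionals equal to 1 on S_A and S_B respectively. Let ρ = ∑_{j∈Y} p_j (ρ_j ⊗ τ_j) ∈ V_A ⊗ V_B be separable, with Y finite, (p_j) a probability distribution, ρ_j ∈ S_A, τ_j ∈ S_B. Let X be a finite index set and (A_k)_{k∈X} a family of linear maps V_A → V_A such that: (i) A_k maps the cone {t • σ : t ≥ 0, σ ∈ S_A} into itself; (ii) A_k ∘ A_{k'} = δ_{kk'} A_k; (iii) for the marginal ν := ∑_{j∈Y} p_j ρ_j one has A_k ν = q_k • ψ_k where q_k > 0 and ψ_k is an extreme point of S_A, and (∑_{k∈X} A_k) ν = ν; (iv) ∑_{k∈X} (A_k ⊗ id_{V_B})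 ρ = ρ. Then there exist states σ_k ∈ S_B such that ρ = ∑_{k∈X} q_k • (ψ_k ⊗ σ_k), where the pure states (ψ_k) are perfectly distinguishable by the effects a_k := e_A ∘ A_k, i.e. a_k(ψ_{k'}) = δ_{kk'}. -/
/-!
Applying `A k ⊗ id` to `ρ = ∑ j, p j • ρJ j ⊗ τ j` gives `∑ j, p j • A k (ρJ j) ⊗ τ j`, where the
vectors `p j • A k (ρJ j)` lie in the cone of unnormalized states and add up to `q k • ψ k`.
As `ψ k` is extreme, each of them is a nonnegative multiple of `ψ k`, so `(A k ⊗ id) ρ` is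
`q k • ψ k ⊗ σ k` with `σ k` a convex combination of the `τ j`; summing over `k` recovers `ρ`.
Repeatability gives `A k (ψ k') = δ k k' • ψ k`, because `ψ k'` is proportional to `A k' ν`.
-/

open scoped TensorProduct
open Finset

section ExtremeRay

variable {𝕜 V ι : Type*} [Field 𝕜] [LinearOrder 𝕜] [IsStrictOrderedRing 𝕜]
  [AddCommGroup V] [Module 𝕜 V] {S : Set V} {ψ : V}

theorem smul_eq_smul_of_sum_smul_eq_smul_mem_extremePoints (hS : Convex 𝕜 S)
    (e : V →ₗ[𝕜] 𝕜) (he : ∀ x ∈ S, e x = 1) (hψ : ψ ∈ S.extremePoints 𝕜)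
    {t : Finset ι} {w : ι → 𝕜} {x : ι → V} {c : 𝕜} (hw : ∀ i ∈ t, 0 ≤ w i)
    (hx : ∀ i ∈ t, x i ∈ S) (hsum : ∑ i ∈ t, w i • x i = c • ψ) :
    ∀ i ∈ t, w i • x i = w i • ψ := by
  classical
  set N := t.filter (fun i => ¬x i = ψ)
  have hc : c = ∑ i ∈ t, w i := by
    have := congrArg e hsum
    rw [map_sum, map_smul, he ψ hψ.1, smul_eq_mul, mul_one] at this
    rw [← this]
    exact sum_congr rfl fun i hi => by rw [map_smul, he _ (hx i hi), smul_eq_mul, mul_one]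
  have hP : ∑ i ∈ t.filter (fun i => x i = ψ), w i • x i
      = (∑ i ∈ t.filter (fun i => x i = ψ), w i) • ψ := by
    rw [sum_smul]
    exact sum_congr rfl fun i hi => by rw [(mem_filter.1 hi).2]
  have hN : ∑ i ∈ N, w i • x i = (∑ i ∈ N, w i) • ψ := by
    rw [← sum_filter_add_sum_filter_not t (fun i => x i = ψ)] at hsum hc
    linear_combination (norm := module) hsum - hP + hc • ψ
  -- `S \ {ψ}` is convex, so a positive weight on `N` would put `ψ` into it
  have hN0 : ∑ i ∈ N, w i = 0 := by
    by_contra hne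
    have hpos : 0 < ∑ i ∈ N, w i :=
      (sum_nonneg fun i hi => hw i (mem_filter.1 hi).1).lt_of_ne' hne
    have hmem := (hS.mem_extremePoints_iff_convex_sdiff.1 hψ).2.centerMass_mem
      (fun i hi => hw i (mem_filter.1 hi).1) hpos
      (fun i hi => ⟨hx i (mem_filter.1 hi).1, (mem_filter.1 hi).2⟩)
    rw [Finset.centerMass, hN, inv_smul_smul₀ hne] at hmem
    exact hmem.2 rfl
  intro i hi
  by_cases hxi : x i = ψ
  · rw [hxi]
  · have hwi : w i = 0 := (sum_eq_zero_iff_of_nonneg fun j hj => hw j (mem_filter.1 hj).1).1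
      hN0 i (mem_filter.2 ⟨hi, hxi⟩)
    rw [hwi, zero_smul, zero_smul]

theorem exists_eq_smul_of_sum_eq_smul_mem_extremePoints (hS : Convex 𝕜 S)
    (e : V →ₗ[𝕜] 𝕜) (he : ∀ x ∈ S, e x = 1) (hψ : ψ ∈ S.extremePoints 𝕜)
    {t : Finset ι} {v : ι → V} {c : 𝕜} (hv : ∀ i ∈ t, ∃ r : 𝕜, 0 ≤ r ∧ ∃ s ∈ S, v i = r • s)
    (hsum : ∑ i ∈ t, v i = c • ψ) :
    ∀ i ∈ t, ∃ r : 𝕜, 0 ≤ r ∧ v i = r • ψ := by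
  choose! r hr s hs hv using hv
  have := smul_eq_smul_of_sum_smul_eq_smul_mem_extremePoints hS e he hψ hr hs
    ((sum_congr rfl fun i hi => (hv i hi).symm).trans hsum)
  exact fun i hi => ⟨r i, hr i hi, (hv i hi).trans (this i hi)⟩

end ExtremeRay

section Tensor

variable {𝕜 V W U ι : Type*} [Field 𝕜] [LinearOrder 𝕜] [IsStrictOrderedRing 𝕜]
  [AddCommGroup V] [Module 𝕜 V] [AddCommGroup W] [Module 𝕜 W] [AddCommGroup U] [Module 𝕜 U]
  [Fintype ι]

theorem exists_map_sum_smul_tmul_eq_smul_tmul {S : Set V} {T : Set W} (hT : Convex 𝕜 T)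
    (e : W →ₗ[𝕜] 𝕜) (he : ∀ x ∈ T, e x = 1) {R : Set U} (hR : Convex 𝕜 R)
    {p : ι → 𝕜} (hp : ∀ j, 0 ≤ p j) {ρ : ι → V} (hρ : ∀ j, ρ j ∈ S) {τ : ι → U}
    (hτ : ∀ j, τ j ∈ R) {f : V →ₗ[𝕜] W}
    (hf : ∀ v : V, (∃ t : 𝕜, 0 ≤ t ∧ ∃ s ∈ S, v = t • s) → ∃ t : 𝕜, 0 ≤ t ∧ ∃ s ∈ T, f v = t • s)
    {q : 𝕜} (hq : 0 < q) {ψ : W} (hψ : ψ ∈ T.extremePoints 𝕜)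
    (hfν : f (∑ j, p j • ρ j) = q • ψ) :
    ∃ σ ∈ R, TensorProduct.map f LinearMap.id (∑ j, p j • (ρ j ⊗ₜ[𝕜] τ j)) = q • (ψ ⊗ₜ σ) := by
  have hray : ∀ j ∈ univ, ∃ r : 𝕜, 0 ≤ r ∧ f (p j • ρ j) = r • ψ :=
    exists_eq_smul_of_sum_eq_smul_mem_extremePoints hT e he hψ
      (fun j _ => hf _ ⟨p j, hp j, ρ j, hρ j, rfl⟩) (by rw [← map_sum, hfν])
  choose! r hr hfρ using hray
  have hrq : ∑ j, r j = q := by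
    have := congrArg e hfν
    simp only [map_sum, fun j => hfρ j (mem_univ j), map_smul, he ψ hψ.1, smul_eq_mul,
      mul_one] at this
    exact this
  refine ⟨univ.centerMass r τ, hR.centerMass_mem (fun j _ => hr j (mem_univ j))
    (hrq ▸ hq) (fun j _ => hτ j), ?_⟩
  rw [Finset.centerMass, hrq, TensorProduct.tmul_smul, smul_inv_smul₀ hq.ne', TensorProduct.tmul_sum,
    map_sum]
  refine sum_congr rfl fun j _ => ?_
  rw [map_smul, TensorProduct.map_tmul, LinearMap.id_apply, TensorProduct.smul_tmul',
    ← map_smul, hfρ j (mem_univ j), TensorProduct.smul_tmul, TensorProduct.tmul_smul]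

end Tensor

theorem apply_eq_ite_of_comp_eq_ite {R M X : Type*} [Field R] [AddCommGroup M] [Module R M]
    [DecidableEq X] {A : X → M →ₗ[R] M} (hrep : ∀ k k', A k ∘ₗ A k' = if k = k' then A k else 0)
    {ν : M} {q : X → R} (hq : ∀ k, q k ≠ 0) {ψ : X → M} (hAν : ∀ k, A k ν = q k • ψ k)
    (k k' : X) : A k (ψ k') = if k = k' then ψ k else 0 := by
  have hψ : ψ k' = (q k')⁻¹ • A k' ν := by rw [hAν, inv_smul_smul₀ (hq k')]
  rw [hψ, map_smul, ← LinearMap.comp_apply, hrep]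
  split_ifs with h
  · subst h; rw [hAν, inv_smul_smul₀ (hq k)]
  · rw [LinearMap.zero_apply, smul_zero]

theorem null_discord_structure_general
    {VA VB : Type*}
    [AddCommGroup VA] [Module ℝ VA]
    [AddCommGroup VB] [Module ℝ VB]
    (SA : Set VA) (hSA : Convex ℝ SA)
    (SB : Set VB) (hSB : Convex ℝ SB)
    (eA : VA →ₗ[ℝ] ℝ) (heA : ∀ σ ∈ SA, eA σ = 1)
    {Y : Type*} [Fintype Y]
    (p : Y → ℝ) (hp0 : ∀ j, 0 ≤ p j)
    (ρJ : Y → VA) (hρJ : ∀ j, ρJ j ∈ SA)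
    (τ : Y → VB) (hτ : ∀ j, τ j ∈ SB)
    {X : Type*} [Fintype X] [DecidableEq X]
    (A : X → (VA →ₗ[ℝ] VA))
    (hcone : ∀ k, ∀ v : VA, (∃ t : ℝ, 0 ≤ t ∧ ∃ s ∈ SA, v = t • s) →
      ∃ t : ℝ, 0 ≤ t ∧ ∃ s ∈ SA, A k v = t • s)
    (hrep : ∀ k k', (A k) ∘ₗ (A k') = if k = k' then A k else 0)
    (q : X → ℝ) (hq : ∀ k, 0 < q k)
    (ψ : X → VA) (hψ : ∀ k, ψ k ∈ SA.extremePoints ℝ)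
    (hmarg : ∀ k, A k (∑ j, p j • ρJ j) = q k • ψ k)
    (hnondistAB :
      ∑ k, TensorProduct.map (A k) LinearMap.id (∑ j, p j • (ρJ j ⊗ₜ[ℝ] τ j))
        = ∑ j, p j • (ρJ j ⊗ₜ[ℝ] τ j)) :
    ∃ σ : X → VB, (∀ k, σ k ∈ SB) ∧
      (∑ j, p j • (ρJ j ⊗ₜ[ℝ] τ j)) = ∑ k, q k • (ψ k ⊗ₜ[ℝ] σ k) ∧
      ∀ k k', (eA ∘ₗ A k) (ψ k') = if k = k' then 1 else 0 := by
  choose σ hσ hAρ using fun k => exists_map_sum_smul_tmul_eq_smul_tmul hSA eA heA hSB hp0 hρJ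
    hτ (hcone k) (hq k) (hψ k) (hmarg k)
  refine ⟨σ, hσ, hnondistAB.symm.trans (sum_congr rfl fun k _ => hAρ k), fun k k' => ?_⟩
  rw [LinearMap.comp_apply, apply_eq_ite_of_comp_eq_ite hrep (fun k => (hq k).ne') hmarg]
  split_ifs
  · exact heA _ (hψ k).1
  · exact map_zero eA

/-- structure theorem for null discord states, Theorem 4 of the
paper. Let `ρ = ∑ j, p j • (ρJ j ⊗ τ j)` be a separable bipartite state, and let
`(A k)` be a test on system `A` mapping the cone of unnormalized states into itself,
repeatable, providing complete objective information about the marginal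
`ν = ∑ j, p j • ρJ j` (i.e. `A k ν = q k • ψ k` with `q k > 0`, `ψ k` pure, and
`(∑ k, A k) ν = ν`), and such that `(A k ⊗ id)` provides objective information on `ρ`.
Then `ρ = ∑ k, q k • (ψ k ⊗ σ k)` for some states `σ k ∈ S_B`, with the pure states
`ψ k` perfectly distinguishable by the effects `a k := e_A ∘ A k`. -/
theorem null_discord_structure
    {VA VB : Type*}
    [AddCommGroup VA] [Module ℝ VA] [FiniteDimensional ℝ VA]
    [AddCommGroup VB] [Module ℝ VB] [FiniteDimensional ℝ VB]
    (SA : Set VA) (hSA : Convex ℝ SA)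
    (SB : Set VB) (hSB : Convex ℝ SB)
    (eA : VA →ₗ[ℝ] ℝ) (heA : ∀ σ ∈ SA, eA σ = 1)
    (eB : VB →ₗ[ℝ] ℝ) (heB : ∀ σ ∈ SB, eB σ = 1)
    {Y : Type*} [Fintype Y]
    (p : Y → ℝ) (hp0 : ∀ j, 0 ≤ p j) (hp1 : ∑ j, p j = 1)
    (ρJ : Y → VA) (hρJ : ∀ j, ρJ j ∈ SA)
    (τ : Y → VB) (hτ : ∀ j, τ j ∈ SB)
    {X : Type*} [Fintype X] [DecidableEq X]
    (A : X → (VA →ₗ[ℝ] VA))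
    (hcone : ∀ k, ∀ v : VA, (∃ t : ℝ, 0 ≤ t ∧ ∃ s ∈ SA, v = t • s) →
      ∃ t : ℝ, 0 ≤ t ∧ ∃ s ∈ SA, A k v = t • s)
    (hrep : ∀ k k', (A k) ∘ₗ (A k') = if k = k' then A k else 0)
    (q : X → ℝ) (hq : ∀ k, 0 < q k)
    (ψ : X → VA) (hψ : ∀ k, ψ k ∈ SA.extremePoints ℝ)
    (hmarg : ∀ k, A k (∑ j, p j • ρJ j) = q k • ψ k)
    (hnondist : (∑ k, A k) (∑ j, p j • ρJ j) = ∑ j, p j • ρJ j)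
    (hnondistAB :
      ∑ k, TensorProduct.map (A k) LinearMap.id (∑ j, p j • (ρJ j ⊗ₜ[ℝ] τ j))
        = ∑ j, p j • (ρJ j ⊗ₜ[ℝ] τ j)) :
    ∃ σ : X → VB, (∀ k, σ k ∈ SB) ∧
      (∑ j, p j • (ρJ j ⊗ₜ[ℝ] τ j)) = ∑ k, q k • (ψ k ⊗ₜ[ℝ] σ k) ∧
      ∀ k k', (eA ∘ₗ A k) (ψ k') = if k = k' then 1 else 0 :=
  null_discord_structure_general SA hSA SB hSB eA heA p hp0 ρJ hρJ τ hτ A hcone hrep q hq ψ hψ hmarg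
    hnondistAB
end

section
/- Let V_A and V_B be finite-dimensional real vector spaces. Let Z and X be finite index sets, p_i > 0 real numbers, ρ_i, ψ_k ∈ V_A, τ_i, σ_k ∈ V_B, q_k real numbers, and suppose: (i) ∑_{i∈Z} p_i (ρ_i ⊗ τ_i) = ∑_{k∈X} q_k (ψ_k ⊗ σ_k) in V_A ⊗ V_B; (ii) the family (τ_i)_{i∈Z} is linearly independent; (iii) there are linear functionals (a_k)_{k∈X} on V_A with a_k(ψ_{k'}) = δ_{kk'}. Then for every i ∈ Z, ρ_i = ∑_{k∈X} a_k(ρ_i) • ψ_k. -/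
open scoped TensorProduct

/-!
Let `L = id - ∑ₖ ψₖ aₖ`, the map that subtracts from a vector its expansion along the `ψₖ`.
Since `L ψₖ = 0`, applying `L ⊗ id` to the two decompositions gives `∑ᵢ pᵢ L(ρᵢ) ⊗ τᵢ = 0`.
Testing the left factor against functionals turns this into a vanishing linear combination of
the independent `τᵢ`, so every `pᵢ L(ρᵢ)` vanishes, and `pᵢ > 0` gives `L ρᵢ = 0`.
-/

namespace TensorProduct

variable {R M N ι : Type*} [CommRing R] [AddCommGroup M] [Module R M] [Module.Projective R M]
  [AddCommGroup N] [Module R N] [Fintype ι]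

theorem eq_zero_of_sum_tmul_eq_zero_of_linearIndependent {x : ι → M} {τ : ι → N}
    (hτ : LinearIndependent R τ) (h : ∑ i, x i ⊗ₜ[R] τ i = 0) (i : ι) : x i = 0 := by
  rw [← Module.forall_dual_apply_eq_zero_iff R]
  intro f
  have hf : ∑ j, f (x j) • τ j = 0 := by
    simpa using congrArg (TensorProduct.lid R N ∘ LinearMap.rTensor N f) h
  exact Fintype.linearIndependent_iff.mp hτ _ hf i

end TensorProduct

theorem local_states_decompose_over_pure_states_general
    {VA VB : Type*}
    [AddCommGroup VA] [Module ℝ VA]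
    [AddCommGroup VB] [Module ℝ VB]
    {Z X : Type*} [Fintype Z] [Fintype X] [DecidableEq X]
    (p : Z → ℝ) (hp : ∀ i, 0 < p i)
    (q : X → ℝ)
    (ρ : Z → VA) (ψ : X → VA)
    (τ : Z → VB) (σ : X → VB)
    (heq : ∑ i, p i • (ρ i ⊗ₜ[ℝ] τ i) = ∑ k, q k • (ψ k ⊗ₜ[ℝ] σ k))
    (hτ : LinearIndependent ℝ τ)
    (a : X → (VA →ₗ[ℝ] ℝ))
    (ha : ∀ k k', a k (ψ k') = if k = k' then 1 else 0) :
    ∀ i, ρ i = ∑ k, a k (ρ i) • ψ k := by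
  set L : VA →ₗ[ℝ] VA := LinearMap.id - ∑ k, (a k).smulRight (ψ k) with hL
  have hL_apply (x : VA) : L x = x - ∑ k, a k x • ψ k := by
    simp [hL, LinearMap.sum_apply]
  have hLψ (k : X) : L (ψ k) = 0 := by
    simp [hL_apply, ha, eq_comm]
  have hsum : ∑ i, (p i • L (ρ i)) ⊗ₜ[ℝ] τ i = 0 := by
    simpa [TensorProduct.smul_tmul', hLψ] using congrArg (LinearMap.rTensor VB L) heq
  intro i
  have hLρ : L (ρ i) = 0 :=
    (smul_eq_zero.mp
      (TensorProduct.eq_zero_of_sum_tmul_eq_zero_of_linearIndependent hτ hsum i)).resolve_left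
      (hp i).ne'
  rwa [hL_apply, sub_eq_zero] at hLρ

/-- central intermediate claim in the proof of Theorem 5 of the
paper. If a separable state `∑ i, p i • (ρ i ⊗ τ i)` with `p i > 0` and linearly
independent `(τ i)` also admits a null-discord decomposition
`∑ k, q k • (ψ k ⊗ σ k)` over states `ψ k` distinguished by effects `a k`
(`a k (ψ k') = δ_{kk'}`), then each `ρ i` is the linear combination
`∑ k, a k (ρ i) • ψ k`. -/
theorem local_states_decompose_over_pure_states
    {VA VB : Type*}
    [AddCommGroup VA] [Module ℝ VA] [FiniteDimensional ℝ VA]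
    [AddCommGroup VB] [Module ℝ VB] [FiniteDimensional ℝ VB]
    {Z X : Type*} [Fintype Z] [Fintype X] [DecidableEq X]
    (p : Z → ℝ) (hp : ∀ i, 0 < p i)
    (q : X → ℝ)
    (ρ : Z → VA) (ψ : X → VA)
    (τ : Z → VB) (σ : X → VB)
    (heq : ∑ i, p i • (ρ i ⊗ₜ[ℝ] τ i) = ∑ k, q k • (ψ k ⊗ₜ[ℝ] σ k))
    (hτ : LinearIndependent ℝ τ)
    (a : X → (VA →ₗ[ℝ] ℝ))
    (ha : ∀ k k', a k (ψ k') = if k = k' then 1 else 0) :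
    ∀ i, ρ i = ∑ k, a k (ρ i) • ψ k :=
  local_states_decompose_over_pure_states_general p hp q ρ ψ τ σ heq hτ a ha
end

section
/- Let d_A, d_B be positive natural numbers, let (v_k)_{k=1}^{d_A} be an orthonormal basis of ℂ^{d_A}, and let Π_k denote the d_A × d_A matrix of the rank-one orthogonal projection onto v_k (so Π_k = v_k v_k†, Π_k Π_{k'} = δ_{kk'} Π_k, and ∑_k Π_k = I). Let ρ be a positive semidefinite (d_A·d_B) × (d_A·d_B) complex matrix with trace 1, regarded as a matrix on the Kronecker product ℂ^{d_A} ⊗ ℂ^{d_B}. Then ∑_{k=1}^{d_A} (Π_k ⊗ I_{d_B}) ρ (Π_k ⊗ I_{d_B}) = ρ if and only if there exist nonnegative reals (p_k)_{k=1}^{d_A} with ∑_k p_k = 1 and positive semidefinite d_B × d_B matrices σ_k with trace 1 such that ρ = ∑_{k=1}^{d_A} p_k (Π_k ⊗ σ_k), where ⊗ denotes the Kronecker product of matrices. -/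
open Matrix
open scoped Kronecker ComplexOrder

/-!
Put `V k = v k ⊗ 1`, so that `P k ⊗ 1 = V k * (V k)ᴴ` and the `k`-th term of the sandwich sum is
`P k ⊗ ((V k)ᴴ * ρ * V k)`. The compressions `(V k)ᴴ * ρ * V k` are positive semidefinite, hence
nonnegative multiples `p k • σ k` of states, and the weights add up to `tr ρ = 1` because each
`P k` has trace one. Conversely, the `P k` are orthogonal idempotents, so sandwiching
`P l ⊗ σ` between `P k ⊗ 1` keeps it when `k = l` and kills it otherwise.
-/

namespace Matrix

variable {m n R : Type*} [Fintype n] [DecidableEq n]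

variable (n) in
/-- The block column `w ⊗ 1`, i.e. the map `x ↦ w ⊗ x`. -/
def vecKroneckerOne [Semiring R] (w : m → R) : Matrix (m × n) n R :=
  of fun x j => w x.1 * (1 : Matrix n n R) x.2 j

theorem vecKroneckerOne_mul_mul_conjTranspose [CommSemiring R] [StarRing R] (w : m → R)
    (σ : Matrix n n R) :
    vecKroneckerOne n w * σ * (vecKroneckerOne n w)ᴴ = vecMulVec w (star w) ⊗ₖ σ := by
  ext ⟨a, i⟩ ⟨b, j⟩
  simp [vecKroneckerOne, mul_apply, one_apply, vecMulVec_apply, apply_ite star]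
  ring

theorem vecMulVec_kronecker_one_mul_mul [Fintype m] [CommSemiring R] [StarRing R] (w : m → R)
    (ρ : Matrix (m × n) (m × n) R) :
    (vecMulVec w (star w) ⊗ₖ (1 : Matrix n n R)) * ρ * (vecMulVec w (star w) ⊗ₖ 1) =
      vecMulVec w (star w) ⊗ₖ ((vecKroneckerOne n w)ᴴ * ρ * vecKroneckerOne n w) := by
  rw [← vecKroneckerOne_mul_mul_conjTranspose w 1, Matrix.mul_one,
    ← vecKroneckerOne_mul_mul_conjTranspose]
  simp only [Matrix.mul_assoc]

theorem kronecker_one_mul_kronecker_mul_kronecker_one [Fintype m] [CommSemiring R]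
    (A B C : Matrix m m R) (σ : Matrix n n R) :
    (A ⊗ₖ (1 : Matrix n n R)) * (B ⊗ₖ σ) * (C ⊗ₖ 1) = (A * B * C) ⊗ₖ σ := by
  rw [← mul_kronecker_mul, ← mul_kronecker_mul, Matrix.one_mul, Matrix.mul_one]

theorem sum_kronecker_one_mul_mul_kronecker_one_of_orthogonal [Fintype m] [CommSemiring R]
    {ι : Type*} [Fintype ι] [DecidableEq ι] {P : ι → Matrix m m R}
    (hP : ∀ k l, P k * P l = if k = l then P k else 0) (c : ι → R) (σ : ι → Matrix n n R) :
    ∑ k, (P k ⊗ₖ (1 : Matrix n n R)) * (∑ l, c l • (P l ⊗ₖ σ l)) * (P k ⊗ₖ 1) =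
      ∑ l, c l • (P l ⊗ₖ σ l) := by
  have hterm : ∀ k l, (P k ⊗ₖ (1 : Matrix n n R)) * (P l ⊗ₖ σ l) * (P k ⊗ₖ 1) =
      if k = l then P l ⊗ₖ σ l else 0 := fun k l => by
    rw [kronecker_one_mul_kronecker_mul_kronecker_one]
    split_ifs with h <;> simp [hP, h]
  simp_rw [Finset.mul_sum, Finset.sum_mul, Matrix.mul_smul, Matrix.smul_mul, hterm, smul_ite,
    smul_zero]
  rw [Finset.sum_comm]
  simp

end Matrix

theorem Matrix.PosSemidef.exists_trace_one_smul_eq {n : Type*} [Fintype n] [DecidableEq n]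
    [Nonempty n] {σ : Matrix n n ℂ} (hσ : σ.PosSemidef) :
    ∃ (t : ℝ) (τ : Matrix n n ℂ), 0 ≤ t ∧ τ.PosSemidef ∧ τ.trace = 1 ∧ σ = (t : ℂ) • τ := by
  obtain ⟨t, ht, htr⟩ := RCLike.nonneg_iff_exists_ofReal.mp hσ.trace_nonneg
  refine ⟨t, ?_⟩
  rcases ht.eq_or_lt with rfl | ht
  · refine ⟨(Fintype.card n : ℂ)⁻¹ • 1, le_rfl, PosSemidef.one.smul (by positivity), ?_, ?_⟩
    · simp [trace_smul]
    · simp [hσ.trace_eq_zero_iff.mp (by simp [← htr])]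
  · refine ⟨((t⁻¹ : ℝ) : ℂ) • σ, ht.le, hσ.smul (by exact_mod_cast (inv_pos.mpr ht).le), ?_, ?_⟩
    · simp [trace_smul, ← htr, ht.ne']
    · simp [smul_smul, ht.ne']

section Orthonormal

variable {ι n : Type*} [Fintype n] {v : ι → EuclideanSpace ℂ n}

theorem Orthonormal.star_dotProduct [DecidableEq ι] (hv : Orthonormal ℂ v) (k l : ι) :
    star (v k).ofLp ⬝ᵥ (v l).ofLp = if k = l then 1 else 0 := by
  rw [dotProduct_comm, ← EuclideanSpace.inner_eq_star_dotProduct, orthonormal_iff_ite.mp hv]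

theorem Orthonormal.vecMulVec_mul_vecMulVec [DecidableEq ι] (hv : Orthonormal ℂ v) (k l : ι) :
    vecMulVec (v k).ofLp (star (v k).ofLp) * vecMulVec (v l).ofLp (star (v l).ofLp) =
      if k = l then vecMulVec (v k).ofLp (star (v k).ofLp) else 0 := by
  rw [Matrix.vecMulVec_mul_vecMulVec, hv.star_dotProduct]
  split_ifs with h <;> simp [h]

theorem Orthonormal.trace_vecMulVec (hv : Orthonormal ℂ v) (k : ι) :
    trace (vecMulVec (v k).ofLp (star (v k).ofLp)) = 1 := by
  classical
  rw [Matrix.trace_vecMulVec, dotProduct_comm, hv.star_dotProduct, if_pos rfl]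

end Orthonormal

theorem quantum_null_discord_iff_general
    (dA dB : ℕ) (hdB : 0 < dB)
    (v : OrthonormalBasis (Fin dA) ℂ (EuclideanSpace ℂ (Fin dA)))
    (P : Fin dA → Matrix (Fin dA) (Fin dA) ℂ)
    (hP : ∀ k i j, P k i j = v k i * (starRingEnd ℂ) (v k j))
    (ρ : Matrix (Fin dA × Fin dB) (Fin dA × Fin dB) ℂ)
    (hρ : ρ.PosSemidef) (hρtr : ρ.trace = 1) :
    (∑ k, (P k ⊗ₖ (1 : Matrix (Fin dB) (Fin dB) ℂ)) * ρ *
        (P k ⊗ₖ (1 : Matrix (Fin dB) (Fin dB) ℂ)) = ρ) ↔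
      ∃ (p : Fin dA → ℝ) (σ : Fin dA → Matrix (Fin dB) (Fin dB) ℂ),
        (∀ k, 0 ≤ p k) ∧ (∑ k, p k = 1) ∧
        (∀ k, (σ k).PosSemidef ∧ (σ k).trace = 1) ∧
        ρ = ∑ k, (p k : ℂ) • (P k ⊗ₖ σ k) := by
  have : Nonempty (Fin dB) := Fin.pos_iff_nonempty.mp hdB
  obtain rfl : P = fun k => vecMulVec (v k).ofLp (star (v k).ofLp) :=
    funext fun k => ext fun i j => hP k i j
  have hv := v.orthonormal
  constructor
  · intro hinv
    let V k := vecKroneckerOne (Fin dB) (v k).ofLp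
    choose p σ hp hσ hσtr hσ_eq using fun k =>
      (hρ.conjTranspose_mul_mul_same (V k)).exists_trace_one_smul_eq
    have hρ_eq : ρ = ∑ k, (p k : ℂ) • (vecMulVec (v k).ofLp (star (v k).ofLp) ⊗ₖ σ k) :=
      hinv.symm.trans <| Finset.sum_congr rfl fun k _ => by
        rw [vecMulVec_kronecker_one_mul_mul, hσ_eq, kronecker_smul]
    refine ⟨p, σ, hp, ?_, fun k => ⟨hσ k, hσtr k⟩, hρ_eq⟩
    have htr : ((∑ k, p k : ℝ) : ℂ) = ρ.trace := by
      rw [hρ_eq]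
      simp [trace_sum, trace_kronecker, hv.trace_vecMulVec, hσtr]
    exact_mod_cast htr.trans hρtr
  · rintro ⟨p, σ, -, -, -, rfl⟩
    exact sum_kronecker_one_mul_mul_kronecker_one_of_orthogonal hv.vecMulVec_mul_vecMulVec _ σ

/-- null discord condition in quantum theory, cf. Theorem 1 of the
paper. Let `(v k)` be an orthonormal basis of `ℂ^{d_A}` and `P k = |v k⟩⟨v k|` the
associated rank-one projection matrices. A bipartite quantum state `ρ` (positive
semidefinite, trace one, on `ℂ^{d_A} ⊗ ℂ^{d_B}`) satisfies the invariance condition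
`∑ k, (P k ⊗ I) ρ (P k ⊗ I) = ρ` if and only if it has the null-discord form
`ρ = ∑ k, p k • (P k ⊗ σ k)` for a probability distribution `(p k)` and quantum
states `σ k` of system `B`. -/
theorem quantum_null_discord_iff
    (dA dB : ℕ) (hdA : 0 < dA) (hdB : 0 < dB)
    (v : OrthonormalBasis (Fin dA) ℂ (EuclideanSpace ℂ (Fin dA)))
    (P : Fin dA → Matrix (Fin dA) (Fin dA) ℂ)
    (hP : ∀ k i j, P k i j = v k i * (starRingEnd ℂ) (v k j))
    (ρ : Matrix (Fin dA × Fin dB) (Fin dA × Fin dB) ℂ)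
    (hρ : ρ.PosSemidef) (hρtr : ρ.trace = 1) :
    (∑ k, (P k ⊗ₖ (1 : Matrix (Fin dB) (Fin dB) ℂ)) * ρ *
        (P k ⊗ₖ (1 : Matrix (Fin dB) (Fin dB) ℂ)) = ρ) ↔
      ∃ (p : Fin dA → ℝ) (σ : Fin dA → Matrix (Fin dB) (Fin dB) ℂ),
        (∀ k, 0 ≤ p k) ∧ (∑ k, p k = 1) ∧
        (∀ k, (σ k).PosSemidef ∧ (σ k).trace = 1) ∧
        ρ = ∑ k, (p k : ℂ) • (P k ⊗ₖ σ k) :=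
  quantum_null_discord_iff_general dA dB hdB v P hP ρ hρ hρtr
end
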